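/- For all $k,\ell\in\{1,\dots,m\}$ one has $\Lambda_\mathbf{i}\big(\varphi'_\mathbf{i}(\varepsilon_k),\ \varphi'_\mathbf{i}(\varepsilon_\ell)\big)=(w_k\omega_{i_k}-\omega_{i_k},\ \omega_{i_\ell}+w_\ell\omega_{i_\ell})$ if $k\le\ell$, and $=(\omega_{i_\ell}-w_\ell\omega_{i_\ell},\ w_k\omega_{i_k}+\omega_{i_k})$ if $k>\ell$. -/

import Mathlib

open Finset

/-- The weight lattice `𝒫`: the free abelian group with basis `{αᵢ, ωᵢ : i ∈ I}`,
represented by pairs of coefficient vectors (first component: coefficients of the `αᵢ`,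
second component: coefficients of the `ωᵢ`). -/
abbrev PLat (n : ℕ) := (Fin n → ℤ) × (Fin n → ℤ)

/-- The coroot lattice `𝒬^∨`: the free abelian group with basis `{αᵢ^∨ : i ∈ I}`,
represented by coefficient vectors. -/
abbrev QvLat (n : ℕ) := Fin n → ℤ

variable {n : ℕ}

/-- The basis element `α_j^∨` of `𝒬^∨`. -/
def coroot (j : Fin n) : QvLat n := fun k => if k = j then 1 else 0

/-- The basis element `α_j` of `𝒫`. -/
def alP (j : Fin n) : PLat n := (fun k => if k = j then 1 else 0, 0)

/-- The basis element `ω_j` of `𝒫`. -/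
def omP (j : Fin n) : PLat n := (0, fun k => if k = j then 1 else 0)

/-- The biadditive pairing `𝒬^∨ × 𝒫 → ℤ` with `(αᵢ^∨, α_j) = a_{ij}` and
`(αᵢ^∨, ω_j) = δ_{ij}`. -/
def pairQP (A : Fin n → Fin n → ℤ) (x : QvLat n) (lam : PLat n) : ℤ :=
  (∑ a, ∑ b, x a * A a b * lam.1 b) + ∑ a, x a * lam.2 a

/-- The simple reflection `sᵢ` on `𝒫`: `sᵢ α_j = α_j - a_{ij} αᵢ`,
`sᵢ ω_j = ω_j - δ_{ij} αᵢ`. -/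
def sP (A : Fin n → Fin n → ℤ) (a : Fin n) (lam : PLat n) : PLat n :=
  (fun j => if j = a then lam.1 a - ((∑ k, A a k * lam.1 k) + lam.2 a) else lam.1 j,
   lam.2)

/-- The simple reflection `sᵢ^∨` on `𝒬^∨`: `sᵢ^∨ α_j^∨ = α_j^∨ - a_{ji} αᵢ^∨`. -/
def sQ (A : Fin n → Fin n → ℤ) (a : Fin n) (x : QvLat n) : QvLat n :=
  fun j => if j = a then x a - ∑ k, A k a * x k else x j

/-- `w_ℓ = s_{i₁} ∘ ⋯ ∘ s_{i_ℓ}` on `𝒫` (with `w₀ = id`). -/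
def wP (A : Fin n → Fin n → ℤ) (ii : ℕ → Fin n) : ℕ → PLat n → PLat n
  | 0 => id
  | (l+1) => wP A ii l ∘ sP A (ii (l+1))

/-- `w_ℓ^∨ = s_{i₁}^∨ ∘ ⋯ ∘ s_{i_ℓ}^∨` on `𝒬^∨` (with `w₀ = id`). -/
def wQ (A : Fin n → Fin n → ℤ) (ii : ℕ → Fin n) : ℕ → QvLat n → QvLat n
  | 0 => id
  | (l+1) => wQ A ii l ∘ sQ A (ii (l+1))

/-- `k⁺ = min({ℓ : k < ℓ ≤ m, i_ℓ = i_k} ∪ {m+1})`. -/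
noncomputable def kplus (ii : ℕ → Fin n) (m k : ℕ) : ℕ :=
  sInf ({l | k < l ∧ l ≤ m ∧ ii l = ii k} ∪ {m+1})

/-- `k⁻ = max({ℓ : 1 ≤ ℓ < k, i_ℓ = i_k} ∪ {0})`. -/
noncomputable def kminus (ii : ℕ → Fin n) (k : ℕ) : ℕ :=
  sSup ({l | 1 ≤ l ∧ l < k ∧ ii l = ii k} ∪ {0})

/-- The standard basis vector `ε_k` of `ℤ^m` (1-based index), with the convention
`ε_s = 0` for `s ∉ {1,…,m}`. -/
def eps (m k : ℕ) : Fin m → ℤ := fun j => if (j : ℕ) + 1 = k then 1 else 0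

/-- `φ_𝐢(ε_k) = -ε_k - ε_{k⁻} - ∑_{ℓ : ℓ < k < ℓ⁺} a_{i_ℓ i_k} ε_ℓ`. -/
noncomputable def phiE (A : Fin n → Fin n → ℤ) (ii : ℕ → Fin n) (m k : ℕ) :
    Fin m → ℤ :=
  -(eps m k) - eps m (kminus ii k)
    - ∑ l : Fin m, (if (l:ℕ)+1 < k ∧ k < kplus ii m ((l:ℕ)+1)
        then A (ii ((l:ℕ)+1)) (ii k) else 0) • eps m ((l:ℕ)+1)

/-- The endomorphism `φ_𝐢` of `ℤ^m`, extended additively from its values on the basis. -/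
noncomputable def phiMap (A : Fin n → Fin n → ℤ) (ii : ℕ → Fin n) (m : ℕ)
    (v : Fin m → ℤ) : Fin m → ℤ :=
  ∑ k : Fin m, v k • phiE A ii m ((k:ℕ)+1)

/-- `φ'_𝐢(ε_ℓ) = -∑_{k=1}^{ℓ} (w_k^∨ α_{i_k}^∨, w_ℓ ω_{i_ℓ}) ε_k`. -/
def phiE' (A : Fin n → Fin n → ℤ) (ii : ℕ → Fin n) (m l : ℕ) : Fin m → ℤ :=
  -∑ k : Fin m, (if (k:ℕ)+1 ≤ l then
      pairQP A (wQ A ii ((k:ℕ)+1) (coroot (ii ((k:ℕ)+1)))) (wP A ii l (omP (ii l)))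
    else 0) • eps m ((k:ℕ)+1)

/-- The endomorphism `φ'_𝐢` of `ℤ^m`, extended additively from its values on the basis. -/
def phiMap' (A : Fin n → Fin n → ℤ) (ii : ℕ → Fin n) (m : ℕ)
    (v : Fin m → ℤ) : Fin m → ℤ :=
  ∑ l : Fin m, v l • phiE' A ii m ((l:ℕ)+1)

/-- `∂_𝐢 ε_k = ε_k - ε_{k⁻}`. -/
noncomputable def derE (ii : ℕ → Fin n) (m k : ℕ) : Fin m → ℤ :=
  eps m k - eps m (kminus ii k)

/-- The endomorphism `∂_𝐢` of `ℤ^m`. -/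
noncomputable def derMap (ii : ℕ → Fin n) (m : ℕ) (v : Fin m → ℤ) : Fin m → ℤ :=
  ∑ k : Fin m, v k • derE ii m ((k:ℕ)+1)

/-- `∫_𝐢 ε_k = ε_k + ε_{k⁻} + ε_{(k⁻)⁻} + ⋯` (summing along the chain `k > k⁻ > ⋯ > 0`). -/
noncomputable def intE (ii : ℕ → Fin n) (m : ℕ) (k : ℕ) : Fin m → ℤ :=
  if h : kminus ii k < k then eps m k + intE ii m (kminus ii k) else eps m k
termination_by k
decreasing_by exact h

/-- The endomorphism `∫_𝐢` of `ℤ^m`. -/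
noncomputable def intMap (ii : ℕ → Fin n) (m : ℕ) (v : Fin m → ℤ) : Fin m → ℤ :=
  ∑ k : Fin m, v k • intE ii m ((k:ℕ)+1)

/-- The skew-symmetric biadditive form `Λ_𝐢` on `ℤ^m` with
`Λ_𝐢(ε_k, ε_ℓ) = sgn(k-ℓ) c_{i_k i_ℓ}` where `c_{ij} = dᵢ a_{ij}`. -/
def LamF (A : Fin n → Fin n → ℤ) (d : Fin n → ℤ) (ii : ℕ → Fin n) (m : ℕ)
    (a b : Fin m → ℤ) : ℤ :=
  ∑ k : Fin m, ∑ l : Fin m, a k * b l *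
    ((((k:ℕ):ℤ) - ((l:ℕ):ℤ)).sign *
      (d (ii ((k:ℕ)+1)) * A (ii ((k:ℕ)+1)) (ii ((l:ℕ)+1))))

/-- The biadditive form `Φ_𝐢` on `ℤ^m` with `Φ_𝐢(ε_k,ε_ℓ) = -d_{i_k}` if `k = ℓ`,
`= -c_{i_ℓ i_k}` if `ℓ < k`, and `= 0` if `ℓ > k`. -/
def PhiF (A : Fin n → Fin n → ℤ) (d : Fin n → ℤ) (ii : ℕ → Fin n) (m : ℕ)
    (a b : Fin m → ℤ) : ℤ :=
  ∑ k : Fin m, ∑ l : Fin m, a k * b l *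
    (if (k:ℕ) = (l:ℕ) then -(d (ii ((k:ℕ)+1)))
     else if (l:ℕ) < (k:ℕ) then
       -(d (ii ((l:ℕ)+1)) * A (ii ((l:ℕ)+1)) (ii ((k:ℕ)+1)))
     else 0)

/-- The entry `b_{pk}` of the exchange matrix `B̃_𝐢`. -/
noncomputable def bcoef (A : Fin n → Fin n → ℤ) (ii : ℕ → Fin n) (m p k : ℕ) : ℤ :=
  if p = kminus ii k then -1
  else if p < k ∧ k < kplus ii m p ∧ kplus ii m p < kplus ii m k then
    -(A (ii p) (ii k))
  else if k < p ∧ p < kplus ii m k ∧ kplus ii m k < kplus ii m p then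
    A (ii p) (ii k)
  else if p = kplus ii m k then 1
  else 0

/-- The column `𝐛^k = ∑_p b_{pk} ε_p ∈ ℤ^m` of the exchange matrix. -/
noncomputable def bvec (A : Fin n → Fin n → ℤ) (ii : ℕ → Fin n) (m k : ℕ) :
    Fin m → ℤ :=
  fun p => bcoef A ii m ((p:ℕ)+1) k

/-- `ρ_𝐢⁺(ε_k) = ε_k + ∑_{ℓ<k, ℓ⁺=m+1} a_{i_ℓ i_k} ε_ℓ`. -/
noncomputable def rhoPE (A : Fin n → Fin n → ℤ) (ii : ℕ → Fin n) (m k : ℕ) :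
    Fin m → ℤ :=
  eps m k + ∑ l : Fin m, (if (l:ℕ)+1 < k ∧ kplus ii m ((l:ℕ)+1) = m+1
      then A (ii ((l:ℕ)+1)) (ii k) else 0) • eps m ((l:ℕ)+1)

/-- `ρ_𝐢⁻(ε_k) = ε_k - ∑_{ℓ≤k, ℓ⁺=m+1} a_{i_ℓ i_k} ε_ℓ`. -/
noncomputable def rhoME (A : Fin n → Fin n → ℤ) (ii : ℕ → Fin n) (m k : ℕ) :
    Fin m → ℤ :=
  eps m k - ∑ l : Fin m, (if (l:ℕ)+1 ≤ k ∧ kplus ii m ((l:ℕ)+1) = m+1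
      then A (ii ((l:ℕ)+1)) (ii k) else 0) • eps m ((l:ℕ)+1)

/-- The endomorphism `ρ_𝐢⁺` of `ℤ^m`. -/
noncomputable def rhoPMap (A : Fin n → Fin n → ℤ) (ii : ℕ → Fin n) (m : ℕ)
    (v : Fin m → ℤ) : Fin m → ℤ :=
  ∑ k : Fin m, v k • rhoPE A ii m ((k:ℕ)+1)

/-- The endomorphism `ρ_𝐢⁻` of `ℤ^m`. -/
noncomputable def rhoMMap (A : Fin n → Fin n → ℤ) (ii : ℕ → Fin n) (m : ℕ)
    (v : Fin m → ℤ) : Fin m → ℤ :=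
  ∑ k : Fin m, v k • rhoME A ii m ((k:ℕ)+1)

/-- `𝐚_λ = -∑_{k=1}^m (w_k^∨ α_{i_k}^∨, w_m λ) ε_k ∈ ℤ^m`. -/
def avec (A : Fin n → Fin n → ℤ) (ii : ℕ → Fin n) (m : ℕ) (lam : PLat n) :
    Fin m → ℤ :=
  fun k => -(pairQP A (wQ A ii ((k:ℕ)+1) (coroot (ii ((k:ℕ)+1)))) (wP A ii m lam))

/-- `|𝐚| = ∑_{k=1}^m a_k α_{i_k} ∈ 𝒬 ⊆ 𝒫`. -/
def degP (ii : ℕ → Fin n) (m : ℕ) (a : Fin m → ℤ) : PLat n :=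
  (fun j => ∑ k : Fin m, if ii ((k:ℕ)+1) = j then a k else 0, 0)

/-- The pairing `(μ, λ) = ∑ mᵢ dᵢ (αᵢ^∨, λ)` for `μ = ∑ mᵢ αᵢ ∈ 𝒬` and `λ ∈ 𝒫`
(induced by identifying `αᵢ` with `dᵢ αᵢ^∨`). -/
def pairAl (A : Fin n → Fin n → ℤ) (d : Fin n → ℤ) (mu lam : PLat n) : ℤ :=
  ∑ j, mu.1 j * (d j * pairQP A (coroot j) lam)

/-!
Write `β_a^∨ = w_a^∨ α_{i_a}^∨` and `γ_k = w_k ω_{i_k}`. By `W`-invariance of the pairing,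
`(β_a^∨, w_k λ) = (α_{i_a}^∨, s_{i_{a+1}} ⋯ s_{i_k} λ)`, so the partial sums
`∑_{a ≤ c} (β_a^∨, w_k λ) α_{i_a}` telescope to `s_{i_{c+1}} ⋯ s_{i_k} λ - w_k λ`; for `c = k` this
says that `-φ'(ε_k)` has degree `ω_{i_k} - γ_k`. Splitting `sgn(a - b) = 1 - [a ≤ b] - [a < b]`
and using `c_{i_a i_b} = d_{i_b} a_{i_b i_a}`, one gets for `b ≤ k`
`Λ(-φ'(ε_k), ε_b) = d_{i_b} (α_{i_b}^∨, ω_{i_k} + γ_k)`: the partial sums up to `b` and `b - 1`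
differ by `s_{i_b}`, so their pairings with `α_{i_b}^∨` cancel. Pairing with `-φ'(ε_ℓ)` for
`ℓ ≤ k` gives `(ω_{i_ℓ} - γ_ℓ, ω_{i_k} + γ_k)`, and the case `k ≤ ℓ` follows by skew-symmetry.
-/

theorem sum_range_sign_smul {M : Type*} [AddCommGroup M] {b k : ℕ} (hbk : b < k) (f : ℕ → M) :
    ∑ a ∈ range k, ((a : ℤ) - b).sign • f a =
      ∑ a ∈ range k, f a - ∑ a ∈ range (b + 1), f a - ∑ a ∈ range b, f a := by
  induction k, hbk using Nat.le_induction with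
  | base =>
    have hneg : ∀ a ∈ range b, ((a : ℤ) - b).sign • f a = -f a := fun a ha => by
      rw [Int.sign_eq_neg_one_of_neg (by rw [mem_range] at ha; omega), neg_one_smul]
    rw [sum_range_succ, sum_congr rfl hneg, sum_neg_distrib]
    simp
  | succ k hbk ih =>
    rw [sum_range_succ _ k, ih, sum_range_succ _ k, Int.sign_eq_one_of_pos (by omega), one_smul]
    abel

section Pairing

variable (A : Fin n → Fin n → ℤ)

def pairQPₗ : QvLat n →ₗ[ℤ] PLat n →ₗ[ℤ] ℤ :=
  LinearMap.mk₂ ℤ (pairQP A)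
    (fun x y lam => by simp only [pairQP, Pi.add_apply, add_mul, sum_add_distrib]; ring)
    (fun c x lam => by
      simp only [pairQP, Pi.smul_apply, smul_eq_mul, mul_sum, mul_add, mul_assoc])
    (fun x lam mu => by
      simp only [pairQP, Prod.fst_add, Prod.snd_add, Pi.add_apply, mul_add, sum_add_distrib]
      ring)
    (fun c x lam => by
      simp only [pairQP, Prod.smul_fst, Prod.smul_snd, Pi.smul_apply, smul_eq_mul, mul_sum,
        mul_add]
      congr 1 <;> refine sum_congr rfl fun _ _ => ?_
      · exact sum_congr rfl fun _ _ => by ring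
      · ring)

theorem pairQP_eq_pairQPₗ (x : QvLat n) (lam : PLat n) : pairQP A x lam = pairQPₗ A x lam :=
  rfl

theorem pairQP_coroot (j : Fin n) (lam : PLat n) :
    pairQP A (coroot j) lam = ∑ b, A j b * lam.1 b + lam.2 j := by
  simp [pairQP, coroot, ite_mul]

theorem pairQP_coroot_alP (i j : Fin n) : pairQP A (coroot i) (alP j) = A i j := by
  simp [pairQP_coroot, alP]

theorem pairQP_alP (x : QvLat n) (j : Fin n) : pairQP A x (alP j) = ∑ a, x a * A a j := by
  simp [pairQP, alP]

theorem sP_eq (i : Fin n) (lam : PLat n) :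
    sP A i lam = lam - pairQP A (coroot i) lam • alP i := by
  ext j
  · by_cases h : j = i <;> simp [sP, pairQP_coroot, alP, h]
  · simp [sP, alP]

theorem sub_sP (i : Fin n) (lam : PLat n) :
    lam - sP A i lam = pairQP A (coroot i) lam • alP i := by
  rw [sP_eq, sub_sub_cancel]

theorem sQ_eq (i : Fin n) (x : QvLat n) :
    sQ A i x = x - pairQP A x (alP i) • coroot i := by
  ext j
  by_cases h : j = i <;> simp [sQ, pairQP_alP, coroot, h, mul_comm]

variable {A}

theorem pairQP_coroot_sP (hA : ∀ i, A i i = 2) (i : Fin n) (lam : PLat n) :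
    pairQP A (coroot i) (sP A i lam) = -pairQP A (coroot i) lam := by
  rw [sP_eq, pairQP_eq_pairQPₗ, map_sub, map_zsmul, ← pairQP_eq_pairQPₗ,
    ← pairQP_eq_pairQPₗ, pairQP_coroot_alP, hA, smul_eq_mul]
  ring

theorem pairQP_sQ_sP (hA : ∀ i, A i i = 2) (i : Fin n) (x : QvLat n) (lam : PLat n) :
    pairQP A (sQ A i x) (sP A i lam) = pairQP A x lam := by
  have h := pairQP_coroot_alP A i i
  rw [sQ_eq, sP_eq]
  simp only [pairQP_eq_pairQPₗ, map_sub, map_zsmul, LinearMap.sub_apply,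
    LinearMap.smul_apply, smul_eq_mul] at h ⊢
  rw [h, hA]
  ring

end Pairing

section WeylWords

variable {A : Fin n → Fin n → ℤ} {ii : ℕ → Fin n}

def betaQ (A : Fin n → Fin n → ℤ) (ii : ℕ → Fin n) (a : ℕ) : QvLat n :=
  wQ A ii a (coroot (ii a))

/-- `wSeg A ii c j = s_{i_{c+1}} ∘ ⋯ ∘ s_{i_{c+j}}`. -/
def wSeg (A : Fin n → Fin n → ℤ) (ii : ℕ → Fin n) : ℕ → ℕ → PLat n → PLat n
  | _, 0 => id
  | c, j + 1 => sP A (ii (c + 1)) ∘ wSeg A ii (c + 1) j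

theorem wP_wSeg (c j : ℕ) (lam : PLat n) :
    wP A ii c (wSeg A ii c j lam) = wP A ii (c + j) lam := by
  induction j generalizing c with
  | zero => rfl
  | succ j ih => exact (ih (c + 1)).trans (by rw [Nat.add_right_comm]; rfl)

theorem pairQP_wQ_wP (hA : ∀ i, A i i = 2) (c : ℕ) (x : QvLat n) (lam : PLat n) :
    pairQP A (wQ A ii c x) (wP A ii c lam) = pairQP A x lam := by
  induction c generalizing x lam with
  | zero => rfl
  | succ c ih => exact (ih _ _).trans (pairQP_sQ_sP hA _ x lam)

theorem sub_wP_eq_sum (hA : ∀ i, A i i = 2) (c : ℕ) (lam : PLat n) :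
    lam - wP A ii c lam =
      ∑ a ∈ range c, pairQP A (betaQ A ii (a + 1)) (wP A ii c lam) • alP (ii (a + 1)) := by
  induction c generalizing lam with
  | zero => simp [wP]
  | succ c ih =>
    have hlast : pairQP A (betaQ A ii (c + 1)) (wP A ii (c + 1) lam) =
        pairQP A (coroot (ii (c + 1))) lam :=
      pairQP_wQ_wP hA (c + 1) _ lam
    calc lam - wP A ii (c + 1) lam
        = (sP A (ii (c + 1)) lam - wP A ii c (sP A (ii (c + 1)) lam))
          + (lam - sP A (ii (c + 1)) lam) := (sub_add_sub_cancel' _ _ _).symm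
      _ = _ := by rw [ih, sub_sP, sum_range_succ, hlast]; rfl

theorem sum_range_smul_alP_eq_wSeg (hA : ∀ i, A i i = 2) (c j : ℕ) (lam : PLat n) :
    ∑ a ∈ range c, pairQP A (betaQ A ii (a + 1)) (wP A ii (c + j) lam) • alP (ii (a + 1)) =
      wSeg A ii c j lam - wP A ii (c + j) lam := by
  rw [← wP_wSeg, sub_wP_eq_sum hA]

theorem sum_range_sign_mul_pairQP (hA : ∀ i, A i i = 2) {b k : ℕ} (hbk : b < k)
    (lam : PLat n) :
    ∑ a ∈ range k, ((a : ℤ) - b).sign *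
      (pairQP A (betaQ A ii (a + 1)) (wP A ii k lam) * A (ii (b + 1)) (ii (a + 1))) =
      pairQP A (coroot (ii (b + 1))) (wP A ii k lam + lam) := by
  obtain ⟨j, rfl⟩ : ∃ j, k = b + 1 + j := ⟨k - (b + 1), by omega⟩
  set w := wP A ii (b + 1 + j) lam
  set u := wSeg A ii (b + 1) j lam
  let p (a : ℕ) : ℤ := pairQP A (betaQ A ii (a + 1)) w
  have hsum (s : Finset ℕ) : ∑ a ∈ s, p a * A (ii (b + 1)) (ii (a + 1)) =
      pairQP A (coroot (ii (b + 1))) (∑ a ∈ s, p a • alP (ii (a + 1))) := by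
    rw [pairQP_eq_pairQPₗ, map_sum]
    refine sum_congr rfl fun a _ => ?_
    rw [map_zsmul, ← pairQP_eq_pairQPₗ, pairQP_coroot_alP, smul_eq_mul]
  have hk : ∑ a ∈ range (b + 1 + j), p a • alP (ii (a + 1)) = lam - w :=
    (sub_wP_eq_sum hA _ lam).symm
  have hb1 : ∑ a ∈ range (b + 1), p a • alP (ii (a + 1)) = u - w :=
    sum_range_smul_alP_eq_wSeg hA (b + 1) j lam
  have hb : ∑ a ∈ range b, p a • alP (ii (a + 1)) = sP A (ii (b + 1)) u - w := by
    have h := sum_range_smul_alP_eq_wSeg (ii := ii) hA b (j + 1) lam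
    rwa [show b + (j + 1) = b + 1 + j by omega] at h
  have hsign := sum_range_sign_smul hbk fun a => p a * A (ii (b + 1)) (ii (a + 1))
  simp only [smul_eq_mul] at hsign
  have hu := pairQP_coroot_sP hA (ii (b + 1)) u
  rw [hsign, hsum, hsum, hsum, hk, hb1, hb]
  simp only [pairQP_eq_pairQPₗ, map_sub, map_add] at hu ⊢
  rw [hu]
  ring

end WeylWords

section Forms

variable {A : Fin n → Fin n → ℤ} {d : Fin n → ℤ} {ii : ℕ → Fin n}

variable (A d) in
def pairAlₗ (lam : PLat n) : PLat n →ₗ[ℤ] ℤ where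
  toFun mu := pairAl A d mu lam
  map_add' mu nu := by simp only [pairAl, Prod.fst_add, Pi.add_apply, add_mul, sum_add_distrib]
  map_smul' c mu := by
    simp only [pairAl, Prod.smul_fst, Pi.smul_apply, smul_eq_mul, mul_sum, mul_assoc,
      RingHom.id_apply]

theorem pairAl_eq_pairAlₗ (mu lam : PLat n) : pairAl A d mu lam = pairAlₗ A d lam mu := rfl

theorem pairAl_alP (j : Fin n) (lam : PLat n) :
    pairAl A d (alP j) lam = d j * pairQP A (coroot j) lam := by
  simp [pairAl, alP]

theorem LamF_neg_neg {m : ℕ} (f g : Fin m → ℤ) :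
    LamF A d ii m (-f) (-g) = LamF A d ii m f g := by
  simp only [LamF, Pi.neg_apply, neg_mul_neg]

theorem LamF_swap (hsym : ∀ i j, d i * A i j = d j * A j i) {m : ℕ} (f g : Fin m → ℤ) :
    LamF A d ii m g f = -LamF A d ii m f g := by
  rw [LamF, LamF, sum_comm, ← sum_neg_distrib]
  refine sum_congr rfl fun p _ => ?_
  rw [← sum_neg_distrib]
  refine sum_congr rfl fun q _ => ?_
  rw [← neg_sub, Int.sign_neg, hsym]
  ring

theorem sum_fin_ite_le {M : Type*} [AddCommMonoid M] {m k : ℕ} (hk : k ≤ m) (F : ℕ → M) :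
    ∑ p : Fin m, (if (p : ℕ) + 1 ≤ k then F p else 0) = ∑ a ∈ range k, F a := by
  rw [Fin.sum_univ_eq_sum_range (fun p => if p + 1 ≤ k then F p else 0), ← sum_filter]
  congr 1
  ext a
  simp only [mem_filter, mem_range]
  omega

theorem LamF_ite_le {m k l : ℕ} (hk : k ≤ m) (hl : l ≤ m) (f g : ℕ → ℤ) :
    LamF A d ii m (fun p => if (p : ℕ) + 1 ≤ k then f p else 0)
        (fun q => if (q : ℕ) + 1 ≤ l then g q else 0) =
      ∑ a ∈ range k, ∑ b ∈ range l, f a * g b *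
        (((a : ℤ) - b).sign * (d (ii (a + 1)) * A (ii (a + 1)) (ii (b + 1)))) := by
  rw [LamF, ← sum_fin_ite_le hk]
  refine sum_congr rfl fun p _ => ?_
  split_ifs with hp
  · rw [← sum_fin_ite_le hl]
    refine sum_congr rfl fun q _ => ?_
    split_ifs <;> simp
  · simp

theorem sum_smul_eps {m : ℕ} (c : Fin m → ℤ) : ∑ q : Fin m, c q • eps m ((q : ℕ) + 1) = c := by
  ext p
  simp [eps, Fin.val_inj]

theorem sum_eps_smul {M : Type*} [AddCommGroup M] {m k : ℕ} (hk1 : 1 ≤ k) (hk2 : k ≤ m)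
    (F : ℕ → M) : ∑ q : Fin m, eps m k q • F ((q : ℕ) + 1) = F k := by
  rw [sum_eq_single (⟨k - 1, by omega⟩ : Fin m)]
  · simp [eps, show k - 1 + 1 = k by omega]
  · intro q _ hq
    simp [eps, show (q : ℕ) + 1 ≠ k from fun h => hq (Fin.ext (by dsimp only; omega))]
  · simp

theorem phiMap'_eps {m k : ℕ} (hk1 : 1 ≤ k) (hk2 : k ≤ m) :
    phiMap' A ii m (eps m k) = -fun p : Fin m =>
      if (p : ℕ) + 1 ≤ k then pairQP A (betaQ A ii ((p : ℕ) + 1)) (wP A ii k (omP (ii k)))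
      else 0 := by
  rw [phiMap', sum_eps_smul hk1 hk2 (phiE' A ii m), phiE', sum_smul_eps]
  rfl

theorem LamF_phiMap'_eps_of_le (hA : ∀ i, A i i = 2) (hsym : ∀ i j, d i * A i j = d j * A j i)
    {m k l : ℕ} (hl : 1 ≤ l) (hlk : l ≤ k) (hk : k ≤ m) :
    LamF A d ii m (phiMap' A ii m (eps m k)) (phiMap' A ii m (eps m l)) =
      pairAl A d (omP (ii l) - wP A ii l (omP (ii l))) (wP A ii k (omP (ii k)) + omP (ii k)) := by
  rw [phiMap'_eps (by omega) hk, phiMap'_eps hl (by omega), LamF_neg_neg,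
    LamF_ite_le hk (by omega) (fun a => pairQP A (betaQ A ii (a + 1)) (wP A ii k (omP (ii k))))
      (fun b => pairQP A (betaQ A ii (b + 1)) (wP A ii l (omP (ii l)))),
    sum_comm, sub_wP_eq_sum hA l, pairAl_eq_pairAlₗ, map_sum]
  refine sum_congr rfl fun b hb => ?_
  rw [map_zsmul, ← pairAl_eq_pairAlₗ, pairAl_alP,
    ← sum_range_sign_mul_pairQP hA (by rw [mem_range] at hb; omega : b < k), smul_eq_mul, mul_sum, mul_sum]
  refine sum_congr rfl fun a _ => ?_
  rw [hsym]
  ring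

end Forms

theorem Lambda_phi'_eps_general {n m : ℕ}
    (A : Fin n → Fin n → ℤ) (d : Fin n → ℤ)
    (hA : ∀ i, A i i = 2)
    (hsym : ∀ i j, d i * A i j = d j * A j i)
    (ii : ℕ → Fin n)
    (k : ℕ) (hk1 : 1 ≤ k) (hk2 : k ≤ m)
    (l : ℕ) (hl1 : 1 ≤ l) (hl2 : l ≤ m) :
    LamF A d ii m (phiMap' A ii m (eps m k)) (phiMap' A ii m (eps m l)) =
      if k ≤ l then
        pairAl A d (wP A ii k (omP (ii k)) - omP (ii k))
          (omP (ii l) + wP A ii l (omP (ii l)))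
      else
        pairAl A d (omP (ii l) - wP A ii l (omP (ii l)))
          (wP A ii k (omP (ii k)) + omP (ii k)) := by
  split_ifs with hkl
  · rw [LamF_swap hsym, LamF_phiMap'_eps_of_le hA hsym hk1 hkl hl2, pairAl_eq_pairAlₗ,
      pairAl_eq_pairAlₗ, ← map_neg, neg_sub, add_comm]
  · exact LamF_phiMap'_eps_of_le hA hsym hl1 (by omega) hk2

/-- values of `Λ_𝐢` on the vectors `φ'_𝐢(ε_k)`. -/
theorem Lambda_phi'_eps {n m : ℕ} (hm : 1 ≤ m)
    (A : Fin n → Fin n → ℤ) (d : Fin n → ℤ)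
    (hA : ∀ i, A i i = 2) (hd : ∀ i, 0 < d i)
    (hsym : ∀ i j, d i * A i j = d j * A j i)
    (ii : ℕ → Fin n)
    (k : ℕ) (hk1 : 1 ≤ k) (hk2 : k ≤ m)
    (l : ℕ) (hl1 : 1 ≤ l) (hl2 : l ≤ m) :
    LamF A d ii m (phiMap' A ii m (eps m k)) (phiMap' A ii m (eps m l)) =
      if k ≤ l then
        pairAl A d (wP A ii k (omP (ii k)) - omP (ii k))
          (omP (ii l) + wP A ii l (omP (ii l)))
      else
        pairAl A d (omP (ii l) - wP A ii l (omP (ii l)))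
          (wP A ii k (omP (ii k)) + omP (ii k)) :=
  Lambda_phi'_eps_general A d hA hsym ii k hk1 hk2 l hl1 hl2
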